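/- Let S be a closed, densely defined, antilinear operator on a Hilbert space H with S² = 1 on its domain (S is an involution). If S = JΔ^{1/2} is its polar decomposition with J antiunitary and Δ = S*S positive, then J² = 1, JΔ^{1/2}J = Δ^{-1/2}, and hence S = Δ^{-1/2}J. -/

import Mathlib

/-!
Write `S = J P` with `P = Δ^{1/2}` and `Q = P⁻¹`. From `S² = 1` we get `J P J = Q`, and taking
adjoints (an antiunitary satisfies `J* = J⁻¹`) also `J⁻¹ P J⁻¹ = Q`. Together these give
`(J Q J⁻¹)² = P²`; since `J Q J⁻¹` is again positive, uniqueness of positive square roots yields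
`J Q J⁻¹ = P`, i.e. `J² P = P`. As `P` is surjective, `J² = 1`.
-/

open RCLike
open scoped InnerProductSpace

theorem LinearIsometry.inner_map_map_conjLinear {𝕜 E F : Type*} [RCLike 𝕜]
    [NormedAddCommGroup E] [InnerProductSpace 𝕜 E] [NormedAddCommGroup F] [InnerProductSpace 𝕜 F]
    (f : E →ₗᵢ⋆[𝕜] F) (x y : E) : ⟪f x, f y⟫_𝕜 = ⟪y, x⟫_𝕜 := by
  have hI : ∀ z, f (I • z) = -(I • f z) := fun z => by
    rw [f.map_smulₛₗ, RCLike.conj_I, neg_smul]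
  apply RCLike.ext
  · rw [re_inner_eq_norm_add_mul_self_sub_norm_sub_mul_self_div_four,
      re_inner_eq_norm_add_mul_self_sub_norm_sub_mul_self_div_four, ← map_add, ← map_sub,
      f.norm_map, f.norm_map, add_comm, norm_sub_rev]
  · rw [im_inner_eq_norm_sub_i_smul_mul_self_sub_norm_add_i_smul_mul_self_div_four,
      ← inner_conj_symm, conj_im,
      im_inner_eq_norm_sub_i_smul_mul_self_sub_norm_add_i_smul_mul_self_div_four,
      sub_eq_add_neg (f x), ← hI, ← map_add, ← neg_neg (I • f y), ← hI, ← sub_eq_add_neg, ← map_sub,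
      f.norm_map, f.norm_map]
    ring

namespace LinearIsometryEquiv

variable {𝕜 E : Type*} [RCLike 𝕜] [NormedAddCommGroup E] [InnerProductSpace 𝕜 E]

theorem inner_map_left_conjLinear (U : E ≃ₗᵢ⋆[𝕜] E) (x y : E) :
    ⟪U x, y⟫_𝕜 = ⟪U.symm y, x⟫_𝕜 := by
  simpa using U.toLinearIsometry.inner_map_map_conjLinear x (U.symm y)

theorem inner_map_right_conjLinear (U : E ≃ₗᵢ⋆[𝕜] E) (x y : E) :
    ⟪x, U y⟫_𝕜 = ⟪y, U.symm x⟫_𝕜 := by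
  simpa using U.toLinearIsometry.inner_map_map_conjLinear (U.symm x) y

noncomputable def conjCLM (U : E ≃ₗᵢ⋆[𝕜] E) (T : E →L[𝕜] E) : E →L[𝕜] E :=
  (U.toContinuousLinearEquiv : E →SL[starRingEnd 𝕜] E).comp
    (T.comp (U.symm.toContinuousLinearEquiv : E →SL[starRingEnd 𝕜] E))

@[simp]
theorem conjCLM_apply (U : E ≃ₗᵢ⋆[𝕜] E) (T : E →L[𝕜] E) (x : E) :
    U.conjCLM T x = U (T (U.symm x)) := rfl

theorem isPositive_conjCLM (U : E ≃ₗᵢ⋆[𝕜] E) {T : E →L[𝕜] E} (hT : T.IsPositive) :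
    (U.conjCLM T).IsPositive := by
  have hinner : ∀ x y, ⟪U.conjCLM T x, y⟫_𝕜 = ⟪U.symm y, T (U.symm x)⟫_𝕜 := fun x y =>
    U.inner_map_left_conjLinear _ y
  refine ⟨fun x y => ?_, fun x => ?_⟩
  · rw [ContinuousLinearMap.coe_coe, hinner, ← inner_conj_symm x, hinner, inner_conj_symm,
      hT.inner_left_eq_inner_right]
  · rw [ContinuousLinearMap.reApplyInnerSelf, hinner]
    exact hT.re_inner_nonneg_right _

/-- Taking adjoints: for antiunitary `U`, `(U A U)* = U⁻¹ A* U⁻¹`. -/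
theorem symm_apply_symm_apply_eq_of_apply_apply_eq (U : E ≃ₗᵢ⋆[𝕜] E) {A B : E →L[𝕜] E}
    (hA : A.IsSymmetric) (hB : B.IsSymmetric) (h : ∀ x, U (A (U x)) = B x) (x : E) :
    U.symm (A (U.symm x)) = B x := by
  refine ext_inner_right 𝕜 fun y => ?_
  calc ⟪U.symm (A (U.symm x)), y⟫_𝕜
      = ⟪U y, A (U.symm x)⟫_𝕜 := by simpa using U.symm.inner_map_left_conjLinear _ y
    _ = ⟪A (U y), U.symm x⟫_𝕜 := (hA _ _).symm
    _ = ⟪x, B y⟫_𝕜 := by rw [← h, U.inner_map_right_conjLinear]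
    _ = ⟪B x, y⟫_𝕜 := (hB x y).symm

section Complex

variable {H : Type*} [NormedAddCommGroup H] [InnerProductSpace ℂ H] [CompleteSpace H]

theorem involutive_of_apply_apply_eq_inv {U : H ≃ₗᵢ⋆[ℂ] H} {P Q : H →L[ℂ] H}
    (hP : P.IsPositive) (hQ : Q.IsPositive) (hPQ : P ∘L Q = 1)
    (hUPU : ∀ x, U (P (U x)) = Q x) : Function.Involutive U := by
  have hQU : ∀ x, Q (U x) = U.symm (P x) := fun x => by
    simpa using (U.symm_apply_symm_apply_eq_of_apply_apply_eq hP.isSymmetric hQ.isSymmetric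
      hUPU (U x)).symm
  have hQU' : ∀ x, Q (U.symm x) = U (P x) := fun x => by simpa using (hUPU (U.symm x)).symm
  have hsq : U.conjCLM Q ^ 2 = P ^ 2 := by
    ext x
    rw [pow_two, pow_two, mul_apply_eq_comp, mul_apply_eq_comp, conjCLM_apply, conjCLM_apply,
      symm_apply_apply, hQU', hQU, apply_symm_apply]
  have hconj : U.conjCLM Q = P := by
    rwa [CFC.sq_eq_sq_iff _ _ ((U.conjCLM Q).nonneg_iff_isPositive.mpr
      (U.isPositive_conjCLM hQ)) (P.nonneg_iff_isPositive.mpr hP)] at hsq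
  intro x
  obtain ⟨y, rfl⟩ : ∃ y, P y = x := ⟨Q x, by simpa using congr($hPQ x)⟩
  calc U (U (P y)) = U.conjCLM Q y := by rw [conjCLM_apply, hQU']
    _ = P y := by rw [hconj]

end Complex

end LinearIsometryEquiv

theorem tomita_polar_decomposition_general
    {H : Type*} [NormedAddCommGroup H] [InnerProductSpace ℂ H] [CompleteSpace H]
    (J : H → H)
    (hJadd : ∀ x y : H, J (x + y) = J x + J y)
    (hJsmul : ∀ (c : ℂ) (x : H), J (c • x) = (starRingEnd ℂ) c • J x)
    (hJiso : ∀ x : H, ‖J x‖ = ‖x‖)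
    (hJsurj : Function.Surjective J)
    (P Q : H →L[ℂ] H)
    (hPsa : IsSelfAdjoint P) (hQsa : IsSelfAdjoint Q)
    (hPpos : ∀ x : H, 0 ≤ (inner ℂ (P x) x : ℂ).re)
    (hQpos : ∀ x : H, 0 ≤ (inner ℂ (Q x) x : ℂ).re)
    (hPQ : P.comp Q = 1)
    (hS : ∀ x : H, J (P (J (P x))) = x) :
    (∀ x : H, J (J x) = x) ∧ (∀ x : H, J (P (J x)) = Q x) ∧ (∀ x : H, J (P x) = Q (J x)) := by
  let U : H ≃ₗᵢ⋆[ℂ] H := .ofSurjective ⟨⟨⟨J, hJadd⟩, hJsmul⟩, hJiso⟩ hJsurj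
  have hJPJ : ∀ x, J (P (J x)) = Q x := fun x => by
    simpa [← ContinuousLinearMap.comp_apply, hPQ] using hS (Q x)
  have hJJ : Function.Involutive J :=
    LinearIsometryEquiv.involutive_of_apply_apply_eq_inv (U := U) ⟨hPsa.isSymmetric, hPpos⟩
      ⟨hQsa.isSymmetric, hQpos⟩ hPQ hJPJ
  exact ⟨hJJ, hJPJ, fun x => by simpa [hJJ x] using hJPJ (J x)⟩

/-- For an antilinear involution `S = J ∘ Δ^{1/2}` (polar decomposition with antiunitary `J`
and positive invertible `P = Δ^{1/2}`, with inverse `Q = Δ^{-1/2}`), one has `J² = 1`,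
`J Δ^{1/2} J = Δ^{-1/2}`, and hence `S = Δ^{-1/2} J`. -/
theorem tomita_polar_decomposition
    {H : Type*} [NormedAddCommGroup H] [InnerProductSpace ℂ H] [CompleteSpace H]
    (J : H → H)
    (hJadd : ∀ x y : H, J (x + y) = J x + J y)
    (hJsmul : ∀ (c : ℂ) (x : H), J (c • x) = (starRingEnd ℂ) c • J x)
    (hJiso : ∀ x : H, ‖J x‖ = ‖x‖)
    (hJsurj : Function.Surjective J)
    (P Q : H →L[ℂ] H)
    (hPsa : IsSelfAdjoint P) (hQsa : IsSelfAdjoint Q)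
    (hPpos : ∀ x : H, 0 ≤ (inner ℂ (P x) x : ℂ).re)
    (hQpos : ∀ x : H, 0 ≤ (inner ℂ (Q x) x : ℂ).re)
    (hPQ : P.comp Q = 1) (hQP : Q.comp P = 1)
    (hS : ∀ x : H, J (P (J (P x))) = x) :
    (∀ x : H, J (J x) = x) ∧ (∀ x : H, J (P (J x)) = Q x) ∧ (∀ x : H, J (P x) = Q (J x)) :=
  tomita_polar_decomposition_general J hJadd hJsmul hJiso hJsurj P Q hPsa hQsa hPpos hQpos hPQ hS
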